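/- (Remark after Proposition 6) Let T'^{ij} be a smooth symmetric tensor field on ℝ³ satisfying ∂_j T'^{ij}=0 for all i. Then the tensor field T^{ij} := ε^{kl(i} ∂_l T'^{j)}_{k} = (1/2) Σ_{k,l} ( ε^{kli} ∂_l T'_{jk} + ε^{klj} ∂_l T'_{ik} ) is symmetric, transverse (∂_j T^{ij}=0) and traceless (δ_{ij}T^{ij}=0). -/

import Mathlib

/-- Partial derivative in the k-th Cartesian coordinate direction on ℝ^D. -/
noncomputable def pd {D : ℕ} (k : Fin D) (f : (Fin D → ℝ) → ℝ) : (Fin D → ℝ) → ℝ :=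
  fun x => fderiv ℝ f x (Pi.single k 1)

/-- Three-dimensional Levi-Civita symbol with ε^{123} = 1. -/
def eps3 (i j k : Fin 3) : ℝ :=
  if (i,j,k) = (0,1,2) ∨ (i,j,k) = (1,2,0) ∨ (i,j,k) = (2,0,1) then 1
  else if (i,j,k) = (2,1,0) ∨ (i,j,k) = (1,0,2) ∨ (i,j,k) = (0,2,1) then -1
  else 0

/-! The trace `Σ_i ε^{kli} ∂_l T'_{ik}` vanishes because `ε^{kli}` is antisymmetric in `(i, k)`
while `∂_l T'_{ik}` is symmetric. In `∂_j T^{ij}`, the term `ε^{kli} ∂_j ∂_l T'_{jk}` vanishes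
because the derivatives commute and `∂_j T'_{jk} = 0`, and `ε^{klj} ∂_j ∂_l T'_{ik}` vanishes
because `ε^{klj}` is antisymmetric in `(l, j)` while the Hessian is symmetric. -/

theorem Finset.sum_sum_mul_eq_zero_of_antisymm_of_symm {ι R : Type*} [Fintype ι]
    [NonUnitalNonAssocRing R] [IsAddTorsionFree R] {A S : ι → ι → R}
    (hA : ∀ a b, A b a = -A a b) (hS : ∀ a b, S b a = S a b) :
    ∑ a, ∑ b, A a b * S a b = 0 := by
  refine self_eq_neg.mp ?_
  calc ∑ a, ∑ b, A a b * S a b = ∑ a, ∑ b, A b a * S b a := Finset.sum_comm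
    _ = ∑ a, ∑ b, -(A a b * S a b) :=
      Finset.sum_congr rfl fun a _ => Finset.sum_congr rfl fun b _ => by rw [hA, hS, neg_mul]
    _ = -∑ a, ∑ b, A a b * S a b := by simp only [Finset.sum_neg_distrib]

lemma eps3_swap_right (i j k : Fin 3) : eps3 i k j = -eps3 i j k := by
  fin_cases i <;> fin_cases j <;> fin_cases k <;> simp [eps3, Fin.ext_iff]

lemma eps3_swap_outer (i j k : Fin 3) : eps3 k j i = -eps3 i j k := by
  fin_cases i <;> fin_cases j <;> fin_cases k <;> simp [eps3, Fin.ext_iff]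

section PartialDerivatives

variable {D : ℕ} {f g : (Fin D → ℝ) → ℝ} {x : Fin D → ℝ}

lemma ContDiff.differentiable_pd (hf : ContDiff ℝ 2 f) (k : Fin D) : Differentiable ℝ (pd k f) :=
  ((hf.fderiv_right (m := 1) (by norm_num)).clm_apply contDiff_const).differentiable one_ne_zero

lemma pd_add (hf : DifferentiableAt ℝ f x) (hg : DifferentiableAt ℝ g x) (k : Fin D) :
    pd k (fun y => f y + g y) x = pd k f x + pd k g x := by
  simp [pd, fderiv_fun_add hf hg]

lemma pd_const_mul (hf : DifferentiableAt ℝ f x) (c : ℝ) (k : Fin D) :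
    pd k (fun y => c * f y) x = c * pd k f x := by
  simp [pd, fderiv_const_mul hf]

lemma pd_sum {ι : Type*} (s : Finset ι) {F : ι → (Fin D → ℝ) → ℝ}
    (hF : ∀ i ∈ s, DifferentiableAt ℝ (F i) x) (k : Fin D) :
    pd k (fun y => ∑ i ∈ s, F i y) x = ∑ i ∈ s, pd k (F i) x := by
  simp [pd, fderiv_fun_sum hF]

lemma pd_pd_comm (hf : ContDiff ℝ 2 f) (k l : Fin D) (x : Fin D → ℝ) :
    pd k (pd l f) x = pd l (pd k f) x := by
  have hdf : Differentiable ℝ (fderiv ℝ f) :=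
    (hf.fderiv_right (by norm_num)).differentiable one_ne_zero
  unfold pd
  rw [fderiv_clm_apply (hdf x) (differentiableAt_const _),
    fderiv_clm_apply (hdf x) (differentiableAt_const _)]
  simpa using (hf.contDiffAt.isSymmSndFDerivAt (by simp)).eq (Pi.single k 1) (Pi.single l 1)

lemma sum_pd_pd_eq_zero_of_sum_pd_eq_zero {V : Fin D → (Fin D → ℝ) → ℝ}
    (hV : ∀ j, ContDiff ℝ 2 (V j)) (hdiv : ∀ y, ∑ j, pd j (V j) y = 0) (l : Fin D)
    (x : Fin D → ℝ) : ∑ j, pd j (pd l (V j)) x = 0 :=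
  calc ∑ j, pd j (pd l (V j)) x = ∑ j, pd l (pd j (V j)) x :=
        Finset.sum_congr rfl fun j _ => pd_pd_comm (hV j) j l x
    _ = pd l (fun y => ∑ j, pd j (V j) y) x :=
        (pd_sum _ (fun j _ => (hV j).differentiable_pd j x) l).symm
    _ = 0 := by rw [show (fun y => ∑ j, pd j (V j) y) = 0 from funext hdiv]; simp [pd]

end PartialDerivatives

lemma sum_eps3_mul_pd_pd_eq_zero {f : (Fin 3 → ℝ) → ℝ} (hf : ContDiff ℝ 2 f) (k : Fin 3)
    (x : Fin 3 → ℝ) : ∑ l, ∑ j, eps3 k l j * pd j (pd l f) x = 0 :=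
  Finset.sum_sum_mul_eq_zero_of_antisymm_of_symm (fun l j => eps3_swap_right k l j)
    (fun l j => pd_pd_comm hf l j x)

/-- The symmetrized curl `ε^{kl(i} ∂_l S^{j)}_k`. -/
noncomputable def symCurl (S : Fin 3 → Fin 3 → (Fin 3 → ℝ) → ℝ) (i j : Fin 3) :
    (Fin 3 → ℝ) → ℝ :=
  fun x => (1/2 : ℝ) * ∑ k, ∑ l, (eps3 k l i * pd l (S j k) x + eps3 k l j * pd l (S i k) x)

namespace symCurl

variable {S : Fin 3 → Fin 3 → (Fin 3 → ℝ) → ℝ}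

lemma symm (i j : Fin 3) : symCurl S i j = symCurl S j i := by
  funext x
  simp only [symCurl, add_comm]

lemma sum_diag (hS : ∀ a b, S a b = S b a) (x : Fin 3 → ℝ) : ∑ i, symCurl S i i x = 0 := by
  have hsl : ∀ l, ∑ i, ∑ k, eps3 k l i * pd l (S i k) x = 0 := fun l =>
    Finset.sum_sum_mul_eq_zero_of_antisymm_of_symm (fun i k => eps3_swap_outer k l i)
      (fun i k => by rw [hS])
  calc ∑ i, symCurl S i i x = ∑ i, ∑ k, ∑ l, eps3 k l i * pd l (S i k) x := by
        simp only [symCurl, ← two_mul, ← Finset.mul_sum]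
        ring
    _ = ∑ i, ∑ l, ∑ k, eps3 k l i * pd l (S i k) x :=
        Finset.sum_congr rfl fun i _ => Finset.sum_comm
    _ = ∑ l, ∑ i, ∑ k, eps3 k l i * pd l (S i k) x := Finset.sum_comm
    _ = 0 := Finset.sum_eq_zero fun l _ => hsl l

lemma pd_apply (hS : ∀ a b l, Differentiable ℝ (pd l (S a b))) (i j m : Fin 3) (x : Fin 3 → ℝ) :
    pd m (symCurl S i j) x = (1/2 : ℝ) * ∑ k, ∑ l,
      (eps3 k l i * pd m (pd l (S j k)) x + eps3 k l j * pd m (pd l (S i k)) x) := by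
  unfold symCurl
  rw [pd_const_mul (by fun_prop), pd_sum _ (fun k _ => by fun_prop)]
  congr 1
  refine Finset.sum_congr rfl fun k _ => ?_
  rw [pd_sum _ (fun l _ => by fun_prop)]
  refine Finset.sum_congr rfl fun l _ => ?_
  rw [pd_add (by fun_prop) (by fun_prop), pd_const_mul (by fun_prop), pd_const_mul (by fun_prop)]

lemma sum_pd (hS : ∀ a b, ContDiff ℝ 2 (S a b)) (hsymm : ∀ a b, S a b = S b a)
    (hdiv : ∀ a y, ∑ b, pd b (S a b) y = 0) (i : Fin 3) (x : Fin 3 → ℝ) :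
    ∑ j, pd j (symCurl S i j) x = 0 := by
  have hcurl : ∀ k l, ∑ j, eps3 k l i * pd j (pd l (S j k)) x = 0 := fun k l => by
    have hdiv' : ∀ y, ∑ j, pd j (S j k) y = 0 := fun y =>
      (Finset.sum_congr rfl fun j _ => by rw [hsymm j k]).trans (hdiv k y)
    rw [← Finset.mul_sum,
      sum_pd_pd_eq_zero_of_sum_pd_eq_zero (fun j => hS j k) hdiv' l x, mul_zero]
  have hhess : ∀ k, ∑ l, ∑ j, eps3 k l j * pd j (pd l (S i k)) x = 0 := fun k =>
    sum_eps3_mul_pd_pd_eq_zero (hS i k) k x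
  calc ∑ j, pd j (symCurl S i j) x
      = (1/2 : ℝ) * ∑ j, ∑ k, ∑ l,
          (eps3 k l i * pd j (pd l (S j k)) x + eps3 k l j * pd j (pd l (S i k)) x) := by
        rw [Finset.mul_sum]
        exact Finset.sum_congr rfl fun j _ =>
          pd_apply (fun a b l => (hS a b).differentiable_pd l) i j j x
    _ = (1/2 : ℝ) * ∑ k, ∑ l, ∑ j,
          (eps3 k l i * pd j (pd l (S j k)) x + eps3 k l j * pd j (pd l (S i k)) x) := by
        rw [Finset.sum_comm]
        exact congrArg _ (Finset.sum_congr rfl fun k _ => Finset.sum_comm)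
    _ = 0 := by simp only [Finset.sum_add_distrib, hcurl, hhess]; simp

end symCurl

/-- remark after Proposition 6: if T'^{ij} is a smooth symmetric
transverse tensor field on ℝ³ then T^{ij} := ε^{kl(i} ∂_l T'^{j)}_k is symmetric,
transverse and traceless. -/
theorem stmt_17
    (T' : Fin 3 → Fin 3 → (Fin 3 → ℝ) → ℝ)
    (hsmooth : ∀ i j, ContDiff ℝ (⊤ : ℕ∞) (T' i j))
    (hsym : ∀ i j x, T' i j x = T' j i x)
    (htrans : ∀ i x, ∑ j, pd j (T' i j) x = 0)
    (T : Fin 3 → Fin 3 → (Fin 3 → ℝ) → ℝ)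
    (hT : ∀ i j x, T i j x = (1/2 : ℝ) * ∑ k, ∑ l,
      (eps3 k l i * pd l (T' j k) x + eps3 k l j * pd l (T' i k) x)) :
    (∀ i j x, T i j x = T j i x) ∧
    (∀ i x, ∑ j, pd j (T i j) x = 0) ∧
    (∀ x, ∑ i, T i i x = 0) := by
  obtain rfl : T = symCurl T' := funext fun i => funext fun j => funext (hT i j)
  have hC2 : ∀ a b, ContDiff ℝ 2 (T' a b) := fun a b =>
    (hsmooth a b).of_le (WithTop.coe_le_coe.mpr le_top)
  have hsymm : ∀ a b, T' a b = T' b a := fun a b => funext (hsym a b)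
  exact ⟨fun i j x => by rw [symCurl.symm], symCurl.sum_pd hC2 hsymm htrans,
    symCurl.sum_diag hsymm⟩
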